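/- arXiv:1901.06634 — 2 statements merged into one kernel-verified Lean document; each statement's English description precedes it below -/
import Mathlib

section
/- Let u : [a,b] → ℝ be positive, integrable and convex on [a,b], and let α > 0. Then u((a+b)/2) ≤ (Γ(α+1)/(2(b-a)^α)) [I^α_{a+}u(b) + I^α_{b-}u(a)] ≤ (u(a)+u(b))/2, where I^α_{a+}u(b) = (1/Γ(α)) ∫_a^b (b-s)^{α-1} u(s) ds and I^α_{b-}u(a) = (1/Γ(α)) ∫_a^b (s-a)^{α-1} u(s) ds. -/
/-!
For `x ∈ [a, b]`, convexity gives `2 u((a+b)/2) ≤ u x + u (a+b-x) ≤ u a + u b`. Multiply by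
the weight `(b - x)^(α-1)` and integrate: the reflection `x ↦ a + b - x` turns the weight into
`(x - a)^(α-1)`, so the middle term becomes the sum of the two fractional integrals (times
`Γ(α)`), while the outer terms only involve `∫ (b - x)^(α-1) = (b - a)^α / α`. Since
`Γ(α+1) = α Γ(α)`, dividing out gives both inequalities. A convex function on `[a, b]` is
bounded, which makes its product with the (possibly singular) weight integrable.
-/

open Real MeasureTheory Set
open scoped Interval

theorem convexOn_of_forall_one_sub_mul {s : Set ℝ} {f : ℝ → ℝ} (hs : Convex ℝ s)
    (h : ∀ x ∈ s, ∀ y ∈ s, ∀ μ ∈ Icc (0 : ℝ) 1,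
      f (μ * x + (1 - μ) * y) ≤ μ * f x + (1 - μ) * f y) :
    ConvexOn ℝ s f := by
  refine ⟨hs, fun x hx y hy p q hp hq hpq => ?_⟩
  obtain rfl : q = 1 - p := by linarith
  exact h x hx y hy p ⟨hp, by linarith⟩

theorem IntervalIntegrable.mul_bdd {𝕜 : Type*} [NormedRing 𝕜] {μ : Measure ℝ} {a b C : ℝ}
    {f g : ℝ → 𝕜} (hf : IntervalIntegrable f μ a b)
    (hg : AEStronglyMeasurable g (μ.restrict (Ι a b))) (hC : ∀ x ∈ Ι a b, ‖g x‖ ≤ C) :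
    IntervalIntegrable (fun x => f x * g x) μ a b := by
  rw [intervalIntegrable_iff] at hf ⊢
  exact hf.mul_bdd hg ((ae_restrict_iff' measurableSet_uIoc).2 (.of_forall hC))

theorem intervalIntegral.integral_comp_add_sub {E : Type*} [NormedAddCommGroup E]
    [NormedSpace ℝ E] (f : ℝ → E) (a b : ℝ) :
    ∫ x in a..b, f (a + b - x) = ∫ x in a..b, f x := by
  simp [intervalIntegral.integral_comp_sub_left]

theorem IntervalIntegrable.comp_add_sub {E : Type*} [NormedAddCommGroup E] {f : ℝ → E}
    {a b : ℝ} (hf : IntervalIntegrable f volume a b) :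
    IntervalIntegrable (fun x => f (a + b - x)) volume a b := by
  simpa using (hf.comp_sub_left (a + b)).symm

theorem intervalIntegrable_sub_rpow {a b r : ℝ} (hr : -1 < r) :
    IntervalIntegrable (fun x => (b - x) ^ r) volume a b := by
  simpa using (intervalIntegral.intervalIntegrable_rpow' hr (a := b - a) (b := 0)).comp_sub_left b

theorem integral_sub_rpow {a b r : ℝ} (hr : -1 < r) :
    ∫ x in a..b, (b - x) ^ r = (b - a) ^ (r + 1) / (r + 1) := by
  rw [intervalIntegral.integral_comp_sub_left (fun x => x ^ r), integral_rpow (.inl hr), sub_self,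
    zero_rpow (by linarith), sub_zero]

namespace ConvexOn

variable {a b x : ℝ} {f w : ℝ → ℝ}

theorem add_apply_reflect_le (hf : ConvexOn ℝ (Icc a b) f) (hx : x ∈ Icc a b) :
    f x + f (a + b - x) ≤ f a + f b := by
  have hab : a ≤ b := hx.1.trans hx.2
  have ha : a ∈ Icc a b := left_mem_Icc.2 hab
  have hb : b ∈ Icc a b := right_mem_Icc.2 hab
  rw [← segment_eq_Icc hab] at hx
  obtain ⟨p, q, hp, hq, hpq, rfl⟩ := hx
  have hreflect : a + b - (p • a + q • b) = q • a + p • b := by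
    simp only [smul_eq_mul]; linear_combination (-(a + b)) * hpq
  rw [hreflect]
  have h₁ := hf.2 ha hb hp hq hpq
  have h₂ := hf.2 ha hb hq hp (by rw [add_comm, hpq])
  simp only [smul_eq_mul] at h₁ h₂ ⊢
  linear_combination h₁ + h₂ + (f a + f b) * hpq

theorem two_mul_apply_midpoint_le (hf : ConvexOn ℝ (Icc a b) f) (hx : x ∈ Icc a b) :
    2 * f ((a + b) / 2) ≤ f x + f (a + b - x) := by
  have hx' : a + b - x ∈ Icc a b := ⟨by linarith [hx.2], by linarith [hx.1]⟩
  have h := hf.2 hx hx' (by norm_num : (0 : ℝ) ≤ 1 / 2) (by norm_num : (0 : ℝ) ≤ 1 / 2)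
    (by norm_num)
  have hmid : (1 / 2 : ℝ) • x + (1 / 2 : ℝ) • (a + b - x) = (a + b) / 2 := by
    simp only [smul_eq_mul]; ring
  rw [hmid, smul_eq_mul, smul_eq_mul] at h
  linarith

theorem exists_forall_abs_le (hf : ConvexOn ℝ (Icc a b) f) :
    ∃ C, ∀ x ∈ Icc a b, |f x| ≤ C := by
  set M := max (f a) (f b)
  have hM : ∀ x ∈ Icc a b, f x ≤ M := fun x hx =>
    hf.le_max_of_mem_Icc (left_mem_Icc.2 (hx.1.trans hx.2)) (right_mem_Icc.2 (hx.1.trans hx.2)) hx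
  refine ⟨max M (M - 2 * f ((a + b) / 2)), fun x hx => abs_le.2 ⟨?_, ?_⟩⟩
  · have hx' : a + b - x ∈ Icc a b := ⟨by linarith [hx.2], by linarith [hx.1]⟩
    linarith [hf.two_mul_apply_midpoint_le hx, hM _ hx', le_max_right M (M - 2 * f ((a + b) / 2))]
  · exact (hM x hx).trans (le_max_left _ _)

theorem comp_add_sub (hf : ConvexOn ℝ (Icc a b) f) :
    ConvexOn ℝ (Icc a b) (fun x => f (a + b - x)) := by
  refine ⟨convex_Icc a b, fun x hx y hy p q hp hq hpq => ?_⟩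
  have hreflect : ∀ z ∈ Icc a b, a + b - z ∈ Icc a b := fun z hz =>
    ⟨by linarith [hz.2], by linarith [hz.1]⟩
  have h := hf.2 (hreflect x hx) (hreflect y hy) hp hq hpq
  have hcomb : p • (a + b - x) + q • (a + b - y) = a + b - (p • x + q • y) := by
    simp only [smul_eq_mul]; linear_combination (a + b) * hpq
  rwa [hcomb] at h

theorem intervalIntegrable_mul (hf : ConvexOn ℝ (Icc a b) f) (hab : a ≤ b)
    (hfi : IntervalIntegrable f volume a b) (hw : IntervalIntegrable w volume a b) :
    IntervalIntegrable (fun x => w x * f x) volume a b := by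
  obtain ⟨C, hC⟩ := hf.exists_forall_abs_le
  refine hw.mul_bdd hfi.def'.aestronglyMeasurable fun x hx => hC x (Ioc_subset_Icc_self ?_)
  rwa [uIoc_of_le hab] at hx

theorem integral_mul_two_mul_midpoint_le (hf : ConvexOn ℝ (Icc a b) f) (hab : a ≤ b)
    (hw : IntervalIntegrable w volume a b) (hw₀ : ∀ x ∈ Icc a b, 0 ≤ w x)
    (hwf : IntervalIntegrable (fun x => w x * (f x + f (a + b - x))) volume a b) :
    (∫ x in a..b, w x) * (2 * f ((a + b) / 2)) ≤
      ∫ x in a..b, w x * (f x + f (a + b - x)) := by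
  rw [← intervalIntegral.integral_mul_const]
  exact intervalIntegral.integral_mono_on hab (hw.mul_const _) hwf fun x hx =>
    mul_le_mul_of_nonneg_left (hf.two_mul_apply_midpoint_le hx) (hw₀ x hx)

theorem integral_mul_add_apply_reflect_le (hf : ConvexOn ℝ (Icc a b) f) (hab : a ≤ b)
    (hw : IntervalIntegrable w volume a b) (hw₀ : ∀ x ∈ Icc a b, 0 ≤ w x)
    (hwf : IntervalIntegrable (fun x => w x * (f x + f (a + b - x))) volume a b) :
    ∫ x in a..b, w x * (f x + f (a + b - x)) ≤ (∫ x in a..b, w x) * (f a + f b) := by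
  rw [← intervalIntegral.integral_mul_const]
  exact intervalIntegral.integral_mono_on hab hwf (hw.mul_const _) fun x hx =>
    mul_le_mul_of_nonneg_left (hf.add_apply_reflect_le hx) (hw₀ x hx)

end ConvexOn

theorem fractional_hermite_hadamard_RL_general
    (a b : ℝ) (hab : a < b) (u : ℝ → ℝ) (α : ℝ) (hα : 0 < α)
    (hconv : ∀ x ∈ Set.Icc a b, ∀ y ∈ Set.Icc a b, ∀ μ ∈ Set.Icc (0:ℝ) 1,
      u (μ * x + (1 - μ) * y) ≤ μ * u x + (1 - μ) * u y)
    (hu : IntervalIntegrable u volume a b) :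
    u ((a + b) / 2) ≤
        (Real.Gamma (α + 1) / (2 * (b - a) ^ α)) *
          ((1 / Real.Gamma α) * (∫ s in a..b, (b - s) ^ (α - 1) * u s) +
            (1 / Real.Gamma α) * ∫ s in a..b, (s - a) ^ (α - 1) * u s) ∧
      (Real.Gamma (α + 1) / (2 * (b - a) ^ α)) *
          ((1 / Real.Gamma α) * (∫ s in a..b, (b - s) ^ (α - 1) * u s) +
            (1 / Real.Gamma α) * ∫ s in a..b, (s - a) ^ (α - 1) * u s) ≤
        (u a + u b) / 2 := by
  have hf : ConvexOn ℝ (Icc a b) u := convexOn_of_forall_one_sub_mul (convex_Icc a b) hconv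
  have hw : IntervalIntegrable (fun s => (b - s) ^ (α - 1)) volume a b :=
    intervalIntegrable_sub_rpow (by linarith)
  have hw₀ : ∀ x ∈ Icc a b, 0 ≤ (b - x) ^ (α - 1) := fun x hx =>
    rpow_nonneg (sub_nonneg.2 hx.2) _
  have hwu := hf.intervalIntegrable_mul hab.le hu hw
  have hwu' := hf.comp_add_sub.intervalIntegrable_mul hab.le hu.comp_add_sub hw
  have hsum : (∫ s in a..b, (b - s) ^ (α - 1) * u s) + ∫ s in a..b, (s - a) ^ (α - 1) * u s =
      ∫ s in a..b, (b - s) ^ (α - 1) * (u s + u (a + b - s)) := by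
    simp only [mul_add]
    rw [intervalIntegral.integral_add hwu hwu',
      ← intervalIntegral.integral_comp_add_sub (fun s => (s - a) ^ (α - 1) * u s)]
    congr 1
    exact intervalIntegral.integral_congr fun x _ => by ring_nf
  have hwg : IntervalIntegrable (fun s => (b - s) ^ (α - 1) * (u s + u (a + b - s)))
      volume a b := by
    simpa only [mul_add] using hwu.add hwu'
  have hlow := hf.integral_mul_two_mul_midpoint_le hab.le hw hw₀ hwg
  have hup := hf.integral_mul_add_apply_reflect_le hab.le hw hw₀ hwg
  have hW : ∫ s in a..b, (b - s) ^ (α - 1) = (b - a) ^ α / α := by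
    rw [integral_sub_rpow (by linarith), sub_add_cancel]
  have hW₀ : 0 < 2 * ∫ s in a..b, (b - s) ^ (α - 1) := by
    rw [hW]; have := rpow_pos_of_pos (sub_pos.2 hab) α; positivity
  have hnormalize : ∀ I : ℝ, Gamma (α + 1) / (2 * (b - a) ^ α) * (1 / Gamma α * I) =
      I / (2 * ∫ s in a..b, (b - s) ^ (α - 1)) := by
    intro I
    have := Gamma_pos_of_pos hα
    rw [hW, Gamma_add_one hα.ne']
    field_simp
  rw [← mul_add, hnormalize, hsum]
  exact ⟨(le_div_iff₀ hW₀).2 (by linarith), (div_le_iff₀ hW₀).2 (by linarith)⟩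

theorem fractional_hermite_hadamard_RL
    (a b : ℝ) (hab : a < b) (u : ℝ → ℝ) (α : ℝ) (hα : 0 < α)
    (hupos : ∀ x ∈ Set.Icc a b, 0 < u x)
    (hconv : ∀ x ∈ Set.Icc a b, ∀ y ∈ Set.Icc a b, ∀ μ ∈ Set.Icc (0:ℝ) 1,
      u (μ * x + (1 - μ) * y) ≤ μ * u x + (1 - μ) * u y)
    (hu : IntervalIntegrable u volume a b) :
    u ((a + b) / 2) ≤
        (Real.Gamma (α + 1) / (2 * (b - a) ^ α)) *
          ((1 / Real.Gamma α) * (∫ s in a..b, (b - s) ^ (α - 1) * u s) +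
            (1 / Real.Gamma α) * ∫ s in a..b, (s - a) ^ (α - 1) * u s) ∧
      (Real.Gamma (α + 1) / (2 * (b - a) ^ α)) *
          ((1 / Real.Gamma α) * (∫ s in a..b, (b - s) ^ (α - 1) * u s) +
            (1 / Real.Gamma α) * ∫ s in a..b, (s - a) ^ (α - 1) * u s) ≤
        (u a + u b) / 2 :=
  fractional_hermite_hadamard_RL_general a b hab u α hα hconv hu
end

section
/- Let u : I → ℝ be hyperbolic p-convex and w : I → ℝ positive, integrable and symmetric about (a+b)/2 on [a,b] ⊂ I. Then u((a+b)/2) ∫_a^b cosh[p(x-(a+b)/2)] w(x) dx ≤ ∫_a^b u(x)w(x) dx ≤ ((u(a)+u(b))/2) (cosh(p(b-a)/2))^{-1} ∫_a^b cosh[p(x-(a+b)/2)] w(x) dx. -/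
open Real MeasureTheory

def HypPConvexOn (p : ℝ) (I : Set ℝ) (f : ℝ → ℝ) : Prop :=
  ∀ a ∈ I, ∀ b ∈ I, a < b → ∀ x ∈ Set.Icc a b,
    f x ≤ (Real.sinh (p * (b - x)) / Real.sinh (p * (b - a))) * f a +
          (Real.sinh (p * (x - a)) / Real.sinh (p * (b - a))) * f b

/-
Pair each `x ∈ [a, b]` with its reflection `a + b - x`. Hyperbolic `p`-convexity on the segment
between them, evaluated at the midpoint `(a + b) / 2`, gives
`u ((a + b) / 2) * cosh (p * (x - (a + b) / 2)) ≤ (u x + u (a + b - x)) / 2`; on `[a, b]`,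
evaluated at `x` and at `a + b - x`, it gives the reverse bound by `(u a + u b) / 2` times
`cosh (p * (x - (a + b) / 2)) / cosh (p * (b - a) / 2)`, the sum of the two sinh-weights.
Multiply by `w` and integrate: since `w` is symmetric, the middle term integrates to `∫ u w`.
The same two bounds make `u` bounded on `[a, b]`, which gives the integrability of `u w`.
-/

open Set

theorem sinh_div_sinh_add_sinh_div_sinh {p a b : ℝ} (hp : p ≠ 0) (hab : a ≠ b) (x : ℝ) :
    sinh (p * (b - x)) / sinh (p * (b - a)) + sinh (p * (x - a)) / sinh (p * (b - a)) =
      (cosh (p * (b - a) / 2))⁻¹ * cosh (p * (x - (a + b) / 2)) := by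
  set h := p * (b - a) / 2
  set d := p * (x - (a + b) / 2)
  have hh : sinh h ≠ 0 := by
    rw [Ne, sinh_eq_zero]
    exact div_ne_zero (mul_ne_zero hp (sub_ne_zero.2 hab.symm)) two_ne_zero
  rw [show p * (b - x) = h - d by ring, show p * (x - a) = h + d by ring,
    show p * (b - a) = 2 * h by ring, sinh_two_mul, sinh_sub, sinh_add]
  field_simp
  ring

namespace HypPConvexOn

variable {p : ℝ} {I : Set ℝ} {u : ℝ → ℝ}

theorem map_midpoint_mul_cosh_le (hconv : HypPConvexOn p I u) (hp : p ≠ 0) {x y : ℝ}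
    (hx : x ∈ I) (hy : y ∈ I) : u ((x + y) / 2) * cosh (p * (y - x) / 2) ≤ (u x + u y) / 2 := by
  -- At the midpoint both weights coincide and add up to `1 / cosh (p * (y - x) / 2)`.
  have key : ∀ {x y}, x ∈ I → y ∈ I → x < y →
      u ((x + y) / 2) * cosh (p * (y - x) / 2) ≤ (u x + u y) / 2 := by
    intro x y hx hy hxy
    set α := sinh (p * (y - (x + y) / 2)) / sinh (p * (y - x))
    have hconv_mid := hconv x hx y hy hxy ((x + y) / 2) ⟨by linarith, by linarith⟩
    rw [show (x + y) / 2 - x = y - (x + y) / 2 by ring] at hconv_mid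
    have hα : α + α = (cosh (p * (y - x) / 2))⁻¹ := by
      have := sinh_div_sinh_add_sinh_div_sinh hp hxy.ne ((x + y) / 2)
      rwa [show (x + y) / 2 - x = y - (x + y) / 2 by ring, sub_self, mul_zero, cosh_zero,
        mul_one] at this
    have hcosh := cosh_pos (p * (y - x) / 2)
    calc u ((x + y) / 2) * cosh (p * (y - x) / 2)
        ≤ (α * u x + α * u y) * cosh (p * (y - x) / 2) := by gcongr
      _ = (u x + u y) / 2 * ((α + α) * cosh (p * (y - x) / 2)) := by ring
      _ = (u x + u y) / 2 := by rw [hα, inv_mul_cancel₀ hcosh.ne', mul_one]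
  rcases lt_trichotomy x y with hxy | rfl | hxy
  · exact key hx hy hxy
  · simp
  · have := key hy hx hxy
    rwa [add_comm y, add_comm (u y), ← cosh_neg, show -(p * (x - y) / 2) = p * (y - x) / 2 by ring]
      at this

theorem mul_cosh_le_add_reflect (hconv : HypPConvexOn p I u) (hp : p ≠ 0) {a b x : ℝ}
    (hIab : Icc a b ⊆ I) (hx : x ∈ Icc a b) :
    u ((a + b) / 2) * cosh (p * (x - (a + b) / 2)) ≤ (u x + u (a + b - x)) / 2 := by
  have hx' : a + b - x ∈ Icc a b := ⟨by linarith [hx.2], by linarith [hx.1]⟩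
  have := hconv.map_midpoint_mul_cosh_le hp (hIab hx) (hIab hx')
  rwa [show (x + (a + b - x)) / 2 = (a + b) / 2 by ring, ← cosh_neg,
    show -(p * (a + b - x - x) / 2) = p * (x - (a + b) / 2) by ring] at this

theorem add_reflect_le (hconv : HypPConvexOn p I u) (hp : p ≠ 0) {a b x : ℝ} (ha : a ∈ I)
    (hb : b ∈ I) (hab : a < b) (hx : x ∈ Icc a b) :
    (u x + u (a + b - x)) / 2 ≤
      (u a + u b) / 2 * (cosh (p * (b - a) / 2))⁻¹ * cosh (p * (x - (a + b) / 2)) := by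
  have hx' : a + b - x ∈ Icc a b := ⟨by linarith [hx.2], by linarith [hx.1]⟩
  set α := sinh (p * (b - x)) / sinh (p * (b - a))
  set β := sinh (p * (x - a)) / sinh (p * (b - a))
  have h₁ : u x ≤ α * u a + β * u b := hconv a ha b hb hab x hx
  have h₂ : u (a + b - x) ≤ β * u a + α * u b := by
    have := hconv a ha b hb hab (a + b - x) hx'
    rwa [show b - (a + b - x) = x - a by ring, show a + b - x - a = b - x by ring] at this
  calc (u x + u (a + b - x)) / 2 ≤ (u a + u b) / 2 * (α + β) := by linarith
    _ = _ := by rw [sinh_div_sinh_add_sinh_div_sinh hp hab.ne, mul_assoc]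

theorem le_abs_add_abs (hconv : HypPConvexOn p I u) (hp : 0 < p) {a b x : ℝ} (ha : a ∈ I)
    (hb : b ∈ I) (hab : a < b) (hx : x ∈ Icc a b) : u x ≤ |u a| + |u b| := by
  have hS : 0 < sinh (p * (b - a)) := sinh_pos_iff.2 (by nlinarith)
  have weight : ∀ t, 0 ≤ t → t ≤ b - a → ∀ c, sinh (p * t) / sinh (p * (b - a)) * c ≤ |c| := by
    intro t ht₀ ht c
    have hw₀ : 0 ≤ sinh (p * t) / sinh (p * (b - a)) :=
      div_nonneg (sinh_nonneg_iff.2 (by positivity)) hS.le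
    have hw₁ : sinh (p * t) / sinh (p * (b - a)) ≤ 1 :=
      (div_le_one hS).2 (sinh_le_sinh.2 (by gcongr))
    calc sinh (p * t) / sinh (p * (b - a)) * c ≤ sinh (p * t) / sinh (p * (b - a)) * |c| := by
          gcongr; exact le_abs_self c
      _ ≤ |c| := mul_le_of_le_one_left (abs_nonneg c) hw₁
  have := hconv a ha b hb hab x hx
  linarith [weight (b - x) (by linarith [hx.2]) (by linarith [hx.1]) (u a),
    weight (x - a) (by linarith [hx.1]) (by linarith [hx.2]) (u b)]

theorem abs_le_of_mem_Icc (hconv : HypPConvexOn p I u) (hp : 0 < p) {a b x : ℝ} (hab : a < b)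
    (hIab : Icc a b ⊆ I) (hx : x ∈ Icc a b) :
    |u x| ≤ |u a| + |u b| + 2 * |u ((a + b) / 2)| * cosh (p * (b - a) / 2) := by
  have ha : a ∈ I := hIab (left_mem_Icc.2 hab.le)
  have hb : b ∈ I := hIab (right_mem_Icc.2 hab.le)
  have hx' : a + b - x ∈ Icc a b := ⟨by linarith [hx.2], by linarith [hx.1]⟩
  have hcosh : cosh (p * (x - (a + b) / 2)) ≤ cosh (p * (b - a) / 2) := by
    have hpos : 0 < p * (b - a) / 2 := by have := sub_pos.2 hab; positivity
    rw [cosh_le_cosh, abs_of_pos hpos, _root_.abs_le]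
    constructor <;> nlinarith [hx.1, hx.2]
  have hmid : -(|u ((a + b) / 2)| * cosh (p * (b - a) / 2)) ≤
      u ((a + b) / 2) * cosh (p * (x - (a + b) / 2)) := by
    rw [neg_le, ← neg_mul]
    calc -u ((a + b) / 2) * cosh (p * (x - (a + b) / 2))
        ≤ |u ((a + b) / 2)| * cosh (p * (x - (a + b) / 2)) := by
          gcongr; exact neg_le_abs _
      _ ≤ |u ((a + b) / 2)| * cosh (p * (b - a) / 2) := by gcongr
  have hlow := hconv.mul_cosh_le_add_reflect hp.ne' hIab hx
  rw [_root_.abs_le]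
  constructor
  · linarith [hconv.le_abs_add_abs hp ha hb hab hx']
  · linarith [hconv.le_abs_add_abs hp ha hb hab hx,
      mul_nonneg (abs_nonneg (u ((a + b) / 2))) (cosh_pos (p * (b - a) / 2)).le]

end HypPConvexOn

theorem IntervalIntegrable.mul_of_abs_le {f g : ℝ → ℝ} {a b C : ℝ}
    (hf : IntervalIntegrable f volume a b) (hfC : ∀ x ∈ uIcc a b, |f x| ≤ C)
    (hg : IntervalIntegrable g volume a b) : IntervalIntegrable (fun x => f x * g x) volume a b := by
  rw [intervalIntegrable_iff] at hf hg ⊢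
  exact hg.bdd_mul hf.aestronglyMeasurable
    (ae_restrict_of_forall_mem measurableSet_uIoc fun x hx => hfC x (uIoc_subset_uIcc hx))

theorem IntervalIntegrable.comp_reflect {f : ℝ → ℝ} {a b : ℝ}
    (hf : IntervalIntegrable f volume a b) :
    IntervalIntegrable (fun x => f (a + b - x)) volume a b := by
  simpa using (hf.comp_sub_left (a + b)).symm

theorem intervalIntegral.integral_add_reflect_div_two {f : ℝ → ℝ} {a b : ℝ}
    (hf : IntervalIntegrable f volume a b) :
    ∫ x in a..b, (f x + f (a + b - x)) / 2 = ∫ x in a..b, f x := by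
  have hreflect : ∫ x in a..b, f (a + b - x) = ∫ x in a..b, f x := by simp
  rw [integral_div, integral_add hf hf.comp_reflect, hreflect, add_self_div_two]

theorem dragomir_hermite_hadamard_fejer_general
    (I : Set ℝ) (p : ℝ) (hp : 0 < p) (u w : ℝ → ℝ)
    (hconv : HypPConvexOn p I u)
    (a b : ℝ) (hab : a < b) (hIab : Set.Icc a b ⊆ I)
    (hu : IntervalIntegrable u volume a b)
    (hw : IntervalIntegrable w volume a b)
    (hwpos : ∀ x ∈ Set.Icc a b, 0 < w x)
    (hwsym : ∀ x ∈ Set.Icc a b, w (a + b - x) = w x) :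
    u ((a + b) / 2) * (∫ x in a..b, Real.cosh (p * (x - (a + b) / 2)) * w x) ≤
        (∫ x in a..b, u x * w x) ∧
      (∫ x in a..b, u x * w x) ≤
        ((u a + u b) / 2) * (Real.cosh (p * (b - a) / 2))⁻¹ *
          ∫ x in a..b, Real.cosh (p * (x - (a + b) / 2)) * w x := by
  have huw : IntervalIntegrable (fun x => u x * w x) volume a b :=
    hu.mul_of_abs_le (fun x hx => hconv.abs_le_of_mem_Icc hp hab hIab (uIcc_of_le hab.le ▸ hx)) hw
  have hcw : IntervalIntegrable (fun x => cosh (p * (x - (a + b) / 2)) * w x) volume a b :=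
    hw.continuousOn_mul (by fun_prop)
  have hsymm : IntervalIntegrable (fun x => (u x * w x + u (a + b - x) * w (a + b - x)) / 2)
      volume a b :=
    (huw.add huw.comp_reflect).div_const 2
  have hsymm_eq : ∀ x ∈ Icc a b,
      (u x * w x + u (a + b - x) * w (a + b - x)) / 2 = (u x + u (a + b - x)) / 2 * w x := by
    intro x hx
    rw [hwsym x hx]
    ring
  rw [← intervalIntegral.integral_add_reflect_div_two huw, ← intervalIntegral.integral_const_mul,
    ← intervalIntegral.integral_const_mul]
  constructor
  · refine intervalIntegral.integral_mono_on hab.le (hcw.const_mul _) hsymm fun x hx => ?_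
    rw [hsymm_eq x hx, ← mul_assoc]
    exact mul_le_mul_of_nonneg_right (hconv.mul_cosh_le_add_reflect hp.ne' hIab hx) (hwpos x hx).le
  · refine intervalIntegral.integral_mono_on hab.le hsymm (hcw.const_mul _) fun x hx => ?_
    rw [hsymm_eq x hx, ← mul_assoc]
    exact mul_le_mul_of_nonneg_right (hconv.add_reflect_le hp.ne' (hIab (left_mem_Icc.2 hab.le))
      (hIab (right_mem_Icc.2 hab.le)) hab hx) (hwpos x hx).le

theorem dragomir_hermite_hadamard_fejer
    (I : Set ℝ) (p : ℝ) (hp : 0 < p) (u w : ℝ → ℝ)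
    (hconv : HypPConvexOn p I u)
    (a b : ℝ) (ha : a ∈ I) (hb : b ∈ I) (hab : a < b) (hIab : Set.Icc a b ⊆ I)
    (hu : IntervalIntegrable u volume a b)
    (hw : IntervalIntegrable w volume a b)
    (hwpos : ∀ x ∈ Set.Icc a b, 0 < w x)
    (hwsym : ∀ x ∈ Set.Icc a b, w (a + b - x) = w x) :
    u ((a + b) / 2) * (∫ x in a..b, Real.cosh (p * (x - (a + b) / 2)) * w x) ≤
        (∫ x in a..b, u x * w x) ∧
      (∫ x in a..b, u x * w x) ≤
        ((u a + u b) / 2) * (Real.cosh (p * (b - a) / 2))⁻¹ *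
          ∫ x in a..b, Real.cosh (p * (x - (a + b) / 2)) * w x :=
  dragomir_hermite_hadamard_fejer_general I p hp u w hconv a b hab hIab hu hw hwpos hwsym
end
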